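/- arXiv:2506.11495 — 2 statements merged into one kernel-verified Lean document; each statement's English description precedes it below -/
import Mathlib

section
/- Let I be a proper ideal of R such that 2 + I is not a unit in R/I. Then for every r in R, the coset r + I is an independent set in G_UZ(R): no two distinct elements of r + I are adjacent. -/
open SimpleGraph

/-- The unit-zero divisor graph of a commutative ring: distinct `u`, `v` are adjacent
iff `u + v` is a unit and `u * v` is a zero divisor. -/
def GUZ (R : Type*) [CommRing R] : SimpleGraph R where
  Adj u v := u ≠ v ∧ IsUnit (u + v) ∧ ∃ y : R, y ≠ 0 ∧ u * v * y = 0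
  symm := by
    constructor; intro u v h
    refine ⟨h.1.symm, ?_, ?_⟩
    · rw [add_comm]; exact h.2.1
    · rw [mul_comm]; exact h.2.2
  loopless := by constructor; intro u h; exact h.1 rfl

theorem Ideal.Quotient.isUnit_two_of_isUnit_add {R : Type*} [CommRing R] {I : Ideal R}
    {r a b : R} (ha : a - r ∈ I) (hb : b - r ∈ I) (hab : IsUnit (a + b)) :
    IsUnit (Ideal.Quotient.mk I 2) := by
  have hcoset : Ideal.Quotient.mk I (a + b) = Ideal.Quotient.mk I 2 * Ideal.Quotient.mk I r := by
    rw [← map_mul, Ideal.Quotient.eq]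
    convert I.add_mem ha hb using 1
    ring
  exact isUnit_of_mul_isUnit_left (hcoset ▸ hab.map (Ideal.Quotient.mk I))

theorem stmt13_general (R : Type*) [CommRing R] (I : Ideal R)
    (h2 : ¬ IsUnit (Ideal.Quotient.mk I (2 : R))) :
    ∀ r a b : R, a - r ∈ I → b - r ∈ I → ¬ (GUZ R).Adj a b :=
  fun _ _ _ ha hb hadj => h2 (Ideal.Quotient.isUnit_two_of_isUnit_add ha hb hadj.2.1)

/-- If `I` is a proper ideal of `R` such that `2 + I` is not a unit of `R/I`, then every
coset `r + I` is an independent set in `G_UZ(R)`. -/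
theorem stmt13 (R : Type*) [CommRing R] [Fintype R] (I : Ideal R) (hI : I ≠ ⊤)
    (h2 : ¬ IsUnit (Ideal.Quotient.mk I (2 : R))) :
    ∀ r a b : R, a - r ∈ I → b - r ∈ I → ¬ (GUZ R).Adj a b :=
  stmt13_general R I h2
end

section
/- Let J(R) be the Jacobson radical of R. If x and y are adjacent in G_UZ(R), then x + J(R) and y + J(R) are adjacent in G_UZ(R/J(R)) (in particular the cosets are distinct). -/
/-! Reduction modulo `J(R)` is a local homomorphism, so it reflects units; in the finite ring
`R/J(R)` the non-units are exactly the zero divisors. Hence `x * y` stays a zero divisor, and the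
cosets are distinct since `x ≡ y` would make `2x`, hence `x`, hence `x * y ≡ x ^ 2` a unit. -/

open SimpleGraph

theorem exists_ne_zero_mul_eq_zero_iff_not_isUnit {S : Type*} [CommRing S] [Finite S] {a : S} :
    (∃ c : S, c ≠ 0 ∧ a * c = 0) ↔ ¬IsUnit a := by
  rw [isUnit_iff_mem_nonZeroDivisors_of_finite, notMem_nonZeroDivisors_iff_left]
  simp only [Set.Nonempty, Set.mem_ofPred_eq, and_comm]

theorem GUZ.adj_map_of_isLocalHom {R S : Type*} [CommRing R] [CommRing S] [Finite S]
    (f : R →+* S) [IsLocalHom f] {x y : R} (h : (GUZ R).Adj x y) : (GUZ S).Adj (f x) (f y) := by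
  obtain ⟨-, hsum, c, hc0, hc⟩ := h
  have hprod : ¬IsUnit (f x * f y) := by
    rw [← map_mul]
    intro hu
    exact hc0 (((isUnit_of_map_unit f _ hu).mul_right_eq_zero).1 hc)
  have hsum' : IsUnit (f x + f y) := map_add f x y ▸ hsum.map f
  refine ⟨fun heq => ?_, hsum', exists_ne_zero_mul_eq_zero_iff_not_isUnit.2 hprod⟩
  rw [← heq, ← two_mul] at hsum'
  have hx : IsUnit (f x) := isUnit_of_mul_isUnit_right hsum'
  exact hprod (heq ▸ hx.mul hx)

/-- If `x` and `y` are adjacent in `G_UZ(R)`, then `x + J(R)` and `y + J(R)` are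
adjacent in `G_UZ(R/J(R))`. -/
theorem stmt15 (R : Type*) [CommRing R] [Fintype R] (x y : R)
    (h : (GUZ R).Adj x y) :
    (GUZ (R ⧸ Ideal.jacobson (⊥ : Ideal R))).Adj
      (Ideal.Quotient.mk (Ideal.jacobson (⊥ : Ideal R)) x)
      (Ideal.Quotient.mk (Ideal.jacobson (⊥ : Ideal R)) y) := by
  have := isLocalHom_of_le_jacobson_bot (Ideal.jacobson (⊥ : Ideal R)) le_rfl
  exact GUZ.adj_map_of_isLocalHom _ h
end
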